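/- arXiv:0704.1022 — 4 statements merged into one kernel-verified Lean document; each statement's English description precedes it below -/
import Mathlib

section
/- Let (X_n) be a random walk-type process on Z with X_0 = x ≤ k, satisfying: (i) the expected number of visits to any single level ℓ is at most C (i.e. Σ_n P(X_n = ℓ) ≤ C), and (ii) from any state z, the single step satisfies P(X_1 - z ≥ t) ≤ C e^{-s t} for all t ≥ 0. Let γ_k = inf{n ≥ 0 : X_n ≥ k}. Then the overshoot satisfies P(X_{γ_k} ≥ k + b) ≤ C' e^{-s b} for all b ≥ 1, where C' depends only on C and s. -/
open MeasureTheory ProbabilityTheory Filter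

/-!
On the overshoot event the walk jumps from some level `k - (ℓ + 1)` below `k` by at least
`ℓ + 1 + b` at some time `n`: take `n + 1` to be the first passage time. Conditioning on `𝓕 n`,
such a jump from a given level at a given time has probability at most `C e^{-s(ℓ+1+b)}` times the
probability of being at that level; summing over `n` with the Green-function bound and then over
`ℓ` as a geometric series gives `C² e^{-s} / (1 - e^{-s}) · e^{-sb}`.
-/

theorem measure_inter_le_of_condExp_indicator_le {Ω : Type*} {m m0 : MeasurableSpace Ω}
    {μ : Measure Ω} [IsFiniteMeasure μ] (hm : m ≤ m0) {A B : Set Ω} (hA : MeasurableSet[m] A)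
    (hB : MeasurableSet B) {c : ℝ} (hc : 0 ≤ c) (h : μ[B.indicator 1 | m] ≤ᵐ[μ] fun _ => c) :
    μ (A ∩ B) ≤ ENNReal.ofReal c * μ A := by
  have hreal : μ.real (A ∩ B) ≤ c * μ.real A :=
    calc μ.real (A ∩ B) = ∫ ω in A, B.indicator 1 ω ∂μ := by
          rw [integral_indicator_one hB, measureReal_restrict_apply hB, Set.inter_comm]
      _ = ∫ ω in A, (μ[B.indicator 1 | m]) ω ∂μ :=
          (setIntegral_condExp hm ((integrable_indicator_iff hB).2
            (integrable_const 1).integrableOn) hA).symm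
      _ ≤ ∫ _ in A, c ∂μ :=
          setIntegral_mono_ae integrable_condExp.integrableOn (integrable_const c).integrableOn h
      _ = c * μ.real A := by rw [setIntegral_const, smul_eq_mul, mul_comm]
  rw [← ofReal_measureReal, ← ofReal_measureReal, ← ENNReal.ofReal_mul hc]
  exact ENNReal.ofReal_le_ofReal hreal

theorem exists_lt_and_le_succ_of_le_apply_sInf {f : ℕ → ℤ} {k a : ℤ} (h0 : f 0 < a)
    (ha : a ≤ f (sInf {n | k ≤ f n})) : ∃ m, f m < k ∧ a ≤ f (m + 1) := by
  obtain ⟨m, hm⟩ := Nat.exists_eq_add_one_of_ne_zero fun h : sInf {n | k ≤ f n} = 0 =>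
    (h0.trans_le (h ▸ ha)).false
  exact ⟨m, not_le.1 (Nat.notMem_of_lt_sInf (hm ▸ m.lt_add_one)), hm ▸ ha⟩

theorem Real.hasSum_exp_neg_mul_nat_add {s : ℝ} (hs : 0 < s) (b : ℝ) :
    HasSum (fun ℓ : ℕ => Real.exp (-s * (ℓ + 1 + b)))
      (Real.exp (-s) / (1 - Real.exp (-s)) * Real.exp (-s * b)) := by
  have hr : Real.exp (-s) < 1 := Real.exp_lt_one_iff.2 (neg_lt_zero.2 hs)
  have hterm (ℓ : ℕ) :
      Real.exp (-s * (ℓ + 1 + b)) = Real.exp (-s * (1 + b)) * Real.exp (-s) ^ ℓ := by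
    rw [← Real.exp_nat_mul, ← Real.exp_add]
    ring_nf
  simp_rw [hterm]
  rw [show Real.exp (-s) / (1 - Real.exp (-s)) * Real.exp (-s * b)
      = Real.exp (-s * (1 + b)) * (1 - Real.exp (-s))⁻¹ by
    rw [mul_add, mul_one, Real.exp_add]; ring]
  exact (hasSum_geometric_of_lt_one (Real.exp_pos _).le hr).mul_left _

section Overshoot

variable {Ω : Type*} {m0 : MeasurableSpace Ω} {μ : Measure Ω} {𝓕 : Filtration ℕ m0}
  {X : ℕ → Ω → ℤ}

theorem measure_level_inter_jump_le [IsFiniteMeasure μ] (hX : ∀ n, Measurable[𝓕 n] (X n))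
    {n : ℕ} {t : ℤ} {c : ℝ} (hc : 0 ≤ c)
    (hstep : μ[(fun ω => if t ≤ X (n+1) ω - X n ω then (1 : ℝ) else 0) | 𝓕 n]
      ≤ᵐ[μ] fun _ => c) (z : ℤ) :
    μ ({ω | X n ω = z} ∩ {ω | t ≤ X (n+1) ω - X n ω}) ≤ ENNReal.ofReal c * μ {ω | X n ω = z} := by
  have hXm (n : ℕ) : Measurable (X n) := (hX n).mono (𝓕.le n) le_rfl
  refine measure_inter_le_of_condExp_indicator_le (𝓕.le n) (hX n (measurableSet_singleton z))
    (((hXm (n+1)).sub (hXm n)) measurableSet_Ici) hc ?_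
  convert hstep using 3 with ω
  simp [Set.indicator]

theorem tsum_measure_level_inter_jump_le [IsFiniteMeasure μ] (hX : ∀ n, Measurable[𝓕 n] (X n))
    {G : ENNReal} (hgreen : ∀ z : ℤ, ∑' n : ℕ, μ {ω | X n ω = z} ≤ G) {t : ℤ} {c : ℝ}
    (hc : 0 ≤ c) (hstep : ∀ n, μ[(fun ω => if t ≤ X (n+1) ω - X n ω then (1 : ℝ) else 0) | 𝓕 n]
      ≤ᵐ[μ] fun _ => c) (z : ℤ) :
    ∑' n, μ ({ω | X n ω = z} ∩ {ω | t ≤ X (n+1) ω - X n ω}) ≤ ENNReal.ofReal c * G :=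
  calc _ ≤ ∑' n, ENNReal.ofReal c * μ {ω | X n ω = z} :=
        ENNReal.tsum_le_tsum fun n => measure_level_inter_jump_le hX hc (hstep n) z
    _ = ENNReal.ofReal c * ∑' n, μ {ω | X n ω = z} := ENNReal.tsum_mul_left
    _ ≤ ENNReal.ofReal c * G := by gcongr; exact hgreen z

theorem overshoot_subset_iUnion {x k b : ℤ} (hxk : x ≤ k) (hX0 : ∀ ω, X 0 ω = x) (hb : 1 ≤ b) :
    {ω | k + b ≤ X (sInf {n : ℕ | k ≤ X n ω}) ω} ⊆
      ⋃ n, ⋃ ℓ : ℕ, {ω | X n ω = k - (ℓ + 1)} ∩ {ω | (ℓ : ℤ) + 1 + b ≤ X (n+1) ω - X n ω} := by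
  intro ω hω
  obtain ⟨n, hlt, hle⟩ :=
    exists_lt_and_le_succ_of_le_apply_sInf (f := fun n => X n ω) (by simp only [hX0]; omega) hω
  simp only [Set.mem_iUnion, Set.mem_inter_iff]
  exact ⟨n, (k - X n ω - 1).toNat, show X n ω = _ by omega, show _ ≤ X (n+1) ω - X n ω by omega⟩

theorem measure_overshoot_le_tsum [IsFiniteMeasure μ] (hX : ∀ n, Measurable[𝓕 n] (X n))
    {x k b : ℤ} (hxk : x ≤ k) (hX0 : ∀ ω, X 0 ω = x) (hb : 1 ≤ b)
    {G : ENNReal} (hgreen : ∀ z : ℤ, ∑' n : ℕ, μ {ω | X n ω = z} ≤ G)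
    {g : ℤ → ℝ} (hg : ∀ t, 0 ≤ g t)
    (hstep : ∀ n t, 0 ≤ t → μ[(fun ω => if t ≤ X (n+1) ω - X n ω then (1 : ℝ) else 0) | 𝓕 n]
      ≤ᵐ[μ] fun _ => g t) :
    μ {ω | k + b ≤ X (sInf {n : ℕ | k ≤ X n ω}) ω} ≤
      ∑' ℓ : ℕ, ENNReal.ofReal (g (ℓ + 1 + b)) * G :=
  calc _ ≤ μ (⋃ n, ⋃ ℓ : ℕ,
          {ω | X n ω = k - (ℓ + 1)} ∩ {ω | (ℓ : ℤ) + 1 + b ≤ X (n+1) ω - X n ω}) :=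
        measure_mono (overshoot_subset_iUnion hxk hX0 hb)
    _ ≤ ∑' n, ∑' ℓ : ℕ,
          μ ({ω | X n ω = k - (ℓ + 1)} ∩ {ω | (ℓ : ℤ) + 1 + b ≤ X (n+1) ω - X n ω}) :=
        (measure_iUnion_le _).trans (ENNReal.tsum_le_tsum fun _ => measure_iUnion_le _)
    _ = ∑' ℓ : ℕ, ∑' n,
          μ ({ω | X n ω = k - (ℓ + 1)} ∩ {ω | (ℓ : ℤ) + 1 + b ≤ X (n+1) ω - X n ω}) :=
        ENNReal.tsum_comm
    _ ≤ _ := ENNReal.tsum_le_tsum fun ℓ =>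
        tsum_measure_level_inter_jump_le hX hgreen (hg _) (fun n => hstep n _ (by omega)) _

end Overshoot

/-- For an integer-level process with (i) a uniform Green-function bound
`∑_n P(X_n = ℓ) ≤ C` at every level, and (ii) an exponential conditional tail for single
steps `P(X_{n+1} - X_n ≥ t | F_n) ≤ C e^{-st}`, the overshoot at the first passage time
`γ_k` over level `k` satisfies `P(X_{γ_k} ≥ k + b) ≤ C' e^{-sb}` for all `b ≥ 1`, with a
constant `C'` depending only on `C` and `s`. -/
theorem overshoot_bound (C s : ℝ) (hC : 0 < C) (hs : 0 < s) :
    ∃ C' : ℝ, 0 < C' ∧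
      ∀ (Ω : Type) (m0 : MeasurableSpace Ω) (μ : Measure Ω),
        IsProbabilityMeasure μ →
        ∀ (𝓕 : Filtration ℕ m0) (X : ℕ → Ω → ℤ) (x k : ℤ), x ≤ k →
          (∀ ω, X 0 ω = x) →
          (∀ n, Measurable[𝓕 n] (X n)) →
          (∀ ℓ : ℤ, ∑' n : ℕ, μ {ω | X n ω = ℓ} ≤ ENNReal.ofReal C) →
          (∀ n : ℕ, ∀ t : ℤ, 0 ≤ t →
            μ[(fun ω => if t ≤ X (n+1) ω - X n ω then (1 : ℝ) else 0) | 𝓕 n]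
              ≤ᵐ[μ] fun _ => C * Real.exp (-s * (t : ℝ))) →
          ∀ b : ℤ, 1 ≤ b →
            μ {ω | k + b ≤ X (sInf {n : ℕ | k ≤ X n ω}) ω}
              ≤ ENNReal.ofReal (C' * Real.exp (-s * (b : ℝ))) := by
  have hr : Real.exp (-s) < 1 := Real.exp_lt_one_iff.2 (neg_lt_zero.2 hs)
  refine ⟨C ^ 2 * (Real.exp (-s) / (1 - Real.exp (-s))),
    mul_pos (pow_pos hC 2) (div_pos (Real.exp_pos _) (sub_pos.2 hr)), ?_⟩
  intro Ω m0 μ _ 𝓕 X x k hxk hX0 hX hgreen hstep b hb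
  have hsum := (Real.hasSum_exp_neg_mul_nat_add hs b).mul_left (C ^ 2)
  calc _ ≤ ∑' ℓ : ℕ,
          ENNReal.ofReal (C * Real.exp (-s * ((ℓ + 1 + b : ℤ) : ℝ))) * ENNReal.ofReal C :=
        measure_overshoot_le_tsum (g := fun t : ℤ => C * Real.exp (-s * t)) hX hxk hX0 hb hgreen
          (fun _ => by positivity) hstep
    _ = ∑' ℓ : ℕ, ENNReal.ofReal (C ^ 2 * Real.exp (-s * (ℓ + 1 + b))) := by
        refine tsum_congr fun ℓ => ?_
        rw [← ENNReal.ofReal_mul (by positivity)]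
        push_cast
        ring_nf
    _ = _ := by
        rw [← ENNReal.ofReal_tsum_of_nonneg (fun _ => by positivity) hsum.summable, hsum.tsum_eq]
        ring_nf
end

section
/- Let (ξ_i)_{i≥1} be i.i.d. positive-integer-valued random variables with E[ξ_1^{p+1}] < ∞ for some integer p ≥ 1. Let V_0 = 0, V_m = ξ_1 + ... + ξ_m, and define the forward recurrence time B_n = min{k ≥ 0 : n + k ∈ {V_m : m ≥ 0}}. Then sup_n E[B_n^p] < ∞. -/
/-!
Condition on the first renewal `ξ t`. If `ξ t ≥ n` then `B_n = ξ t - n`; if `ξ t = c < n`, then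
`B_n` is the forward recurrence time at `n - c` of the renewal process restarted at `ξ (t + 1)`,
which is independent of `ξ t`. With `z k = E[((ξ - k)⁺)^p]` this gives
`E[B_n^p] ≤ z n + Σ_c P(ξ = c) E[B_{n-c}^p]`, hence `E[B_n^p] ≤ z 1 + ⋯ + z n` by induction,
and `Σ_k z k ≤ E[ξ^{p+1}] < ∞`.
-/

open MeasureTheory ProbabilityTheory
open scoped ENNReal

lemma ProbabilityTheory.iIndepFun.indep_comap_iSup_comap_Ioi {Ω ι β : Type*} [Preorder ι]
    {mΩ : MeasurableSpace Ω} {μ : Measure Ω} [MeasurableSpace β] {f : ι → Ω → β}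
    (hmeas : ∀ i, Measurable (f i)) (hindep : iIndepFun f μ) (t : ι) :
    Indep (MeasurableSpace.comap (f t) inferInstance)
      (⨆ i ∈ Set.Ioi t, MeasurableSpace.comap (f i) inferInstance) μ := by
  simpa using indep_iSup_of_disjoint (fun i => (hmeas i).comap_le)
    ((iIndepFun_iff_iIndep _ f μ).1 hindep) (S := {t}) (T := Set.Ioi t) (by simp)

lemma tsum_tsub_pow_le {p : ℕ} (hp : p ≠ 0) (c : ℕ) :
    ∑' k, ((c - k : ℕ) : ℝ≥0∞) ^ p ≤ (c : ℝ≥0∞) ^ (p + 1) := by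
  rw [tsum_eq_sum (s := Finset.range c) fun k hk => by
    simp [Nat.sub_eq_zero_of_le (not_lt.1 (Finset.mem_range.not.1 hk)), hp]]
  calc ∑ k ∈ Finset.range c, ((c - k : ℕ) : ℝ≥0∞) ^ p
      ≤ ∑ _k ∈ Finset.range c, (c : ℝ≥0∞) ^ p :=
        Finset.sum_le_sum fun k _ => by gcongr; exact_mod_cast Nat.sub_le c k
    _ = (c : ℝ≥0∞) ^ (p + 1) := by
        rw [Finset.sum_const, Finset.card_range, nsmul_eq_mul, pow_succ']

lemma tsum_lintegral_tsub_pow_le {Ω : Type*} {mΩ : MeasurableSpace Ω} {μ : Measure Ω}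
    {X : Ω → ℕ} (hX : Measurable X) {p : ℕ} (hp : p ≠ 0) :
    ∑' k, ∫⁻ ω, ((X ω - k : ℕ) : ℝ≥0∞) ^ p ∂μ ≤ ∫⁻ ω, (X ω : ℝ≥0∞) ^ (p + 1) ∂μ := by
  rw [← lintegral_tsum fun k => by fun_prop]
  exact lintegral_mono fun ω => tsum_tsub_pow_le hp (X ω)

namespace Renewal

variable {Ω : Type*} (ξ : ℕ → Ω → ℕ)

def partialSum (t m : ℕ) (ω : Ω) : ℕ := ∑ i ∈ Finset.range m, ξ (t + i) ω

/-- The forward recurrence time at `n` of the renewal process driven by `ξ t, ξ (t + 1), …`. -/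
noncomputable def forwardRecurrenceTime (t n : ℕ) (ω : Ω) : ℕ :=
  sInf {k | ∃ m, partialSum ξ t m ω = n + k}

variable {ξ}

lemma partialSum_succ (t m : ℕ) (ω : Ω) :
    partialSum ξ t (m + 1) ω = ξ t ω + partialSum ξ (t + 1) m ω := by
  simp only [partialSum, Finset.sum_range_succ', add_zero, add_comm, add_left_comm]

lemma le_partialSum (hpos : ∀ i ω, 1 ≤ ξ i ω) (t m : ℕ) (ω : Ω) : m ≤ partialSum ξ t m ω := by
  simpa [partialSum] using Finset.card_nsmul_le_sum (Finset.range m) _ 1 fun i _ => hpos (t + i) ω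

lemma forwardRecurrenceTime_zero (t : ℕ) (ω : Ω) : forwardRecurrenceTime ξ t 0 ω = 0 :=
  Nat.sInf_eq_zero.2 (Or.inl ⟨0, rfl⟩)

lemma forwardRecurrenceTime_eq_sInf_succ {t n : ℕ} (hn : n ≠ 0) (ω : Ω) :
    forwardRecurrenceTime ξ t n ω =
      sInf {k | ∃ m, ξ t ω + partialSum ξ (t + 1) m ω = n + k} := by
  rw [forwardRecurrenceTime]
  congr 1
  ext k
  constructor
  · rintro ⟨_ | m, hm⟩
    · simp [partialSum] at hm
      omega
    · exact ⟨m, by rwa [← partialSum_succ]⟩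
  · rintro ⟨m, hm⟩
    exact ⟨m + 1, by rwa [partialSum_succ]⟩

lemma forwardRecurrenceTime_of_le {t n : ℕ} {ω : Ω} (hn : n ≠ 0) (h : n ≤ ξ t ω) :
    forwardRecurrenceTime ξ t n ω = ξ t ω - n := by
  rw [forwardRecurrenceTime_eq_sInf_succ hn]
  exact IsLeast.csInf_eq ⟨⟨0, by simp [partialSum]; omega⟩, fun k ⟨m, hm⟩ => by omega⟩

lemma forwardRecurrenceTime_of_ge {t n : ℕ} {ω : Ω} (hn : n ≠ 0) (h : ξ t ω ≤ n) :
    forwardRecurrenceTime ξ t n ω = forwardRecurrenceTime ξ (t + 1) (n - ξ t ω) ω := by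
  rw [forwardRecurrenceTime_eq_sInf_succ hn, forwardRecurrenceTime]
  congr 1
  ext k
  exact exists_congr fun m => by omega

lemma measurable_forwardRecurrenceTime {mΩ : MeasurableSpace Ω} (hpos : ∀ i ω, 1 ≤ ξ i ω)
    {t : ℕ} (hmeas : ∀ i, Measurable (ξ (t + i))) (n : ℕ) :
    Measurable (forwardRecurrenceTime ξ t n) := by
  classical
  have hne : ∀ ω, ∃ k, ∃ m, partialSum ξ t m ω = n + k := fun ω =>
    ⟨partialSum ξ t n ω - n, n, by have := le_partialSum hpos t n ω; omega⟩
  rw [show forwardRecurrenceTime ξ t n = fun ω => Nat.find (hne ω) from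
    funext fun ω => Nat.sInf_def (hne ω)]
  refine measurable_find hne fun k => ?_
  simp only [Set.ofPred_exists]
  exact MeasurableSet.iUnion fun m =>
    measurableSet_eq_fun (Finset.measurable_sum _ fun i _ => hmeas i) measurable_const

lemma forwardRecurrenceTime_pow_eq_renewal (hpos : ∀ i ω, 1 ≤ ξ i ω) {p : ℕ} (hp : p ≠ 0) (t : ℕ)
    {n : ℕ} (hn : n ≠ 0) (ω : Ω) :
    (forwardRecurrenceTime ξ t n ω : ℝ≥0∞) ^ p = ((ξ t ω - n : ℕ) : ℝ≥0∞) ^ p +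
      ∑ c ∈ Finset.Ico 1 n, (ξ t ⁻¹' {c}).indicator 1 ω *
        (forwardRecurrenceTime ξ (t + 1) (n - c) ω : ℝ≥0∞) ^ p := by
  classical
  simp only [Set.indicator_apply, Set.mem_preimage, Set.mem_singleton_iff, Pi.one_apply,
    ite_mul, one_mul, zero_mul, Finset.sum_ite_eq, Finset.mem_Ico]
  rcases le_or_gt n (ξ t ω) with h | h
  · rw [forwardRecurrenceTime_of_le hn h, if_neg (by omega), add_zero]
  · rw [forwardRecurrenceTime_of_ge hn h.le, if_pos ⟨hpos t ω, h⟩,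
      Nat.sub_eq_zero_of_le h.le, Nat.cast_zero, zero_pow hp, zero_add]

variable {mΩ : MeasurableSpace Ω} {μ : Measure Ω}

lemma lintegral_indicator_mul_forwardRecurrenceTime_pow (hmeas : ∀ i, Measurable (ξ i))
    (hpos : ∀ i ω, 1 ≤ ξ i ω) (hindep : iIndepFun ξ μ) (t c j p : ℕ) :
    ∫⁻ ω, (ξ t ⁻¹' {c}).indicator 1 ω * (forwardRecurrenceTime ξ (t + 1) j ω : ℝ≥0∞) ^ p ∂μ
      = μ (ξ t ⁻¹' {c}) * ∫⁻ ω, (forwardRecurrenceTime ξ (t + 1) j ω : ℝ≥0∞) ^ p ∂μ := by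
  have hfuture : ∀ i, Measurable[⨆ i ∈ Set.Ioi t, MeasurableSpace.comap (ξ i) inferInstance]
      (ξ (t + 1 + i)) := fun i =>
    (comap_measurable (ξ (t + 1 + i))).mono (le_iSup₂ (f := fun i (_ : i ∈ Set.Ioi t) =>
      MeasurableSpace.comap (ξ i) inferInstance) (t + 1 + i) (by simp; omega)) le_rfl
  have hfirst : Measurable[MeasurableSpace.comap (ξ t) inferInstance]
      ((ξ t ⁻¹' {c}).indicator (1 : Ω → ℝ≥0∞)) :=
    (@measurable_const _ _ _ (MeasurableSpace.comap (ξ t) inferInstance) 1).indicator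
      ⟨{c}, measurableSet_singleton c, rfl⟩
  have hrest : Measurable[⨆ i ∈ Set.Ioi t, MeasurableSpace.comap (ξ i) inferInstance]
      fun ω => (forwardRecurrenceTime ξ (t + 1) j ω : ℝ≥0∞) ^ p :=
    (measurable_from_nat (f := fun k : ℕ => (k : ℝ≥0∞) ^ p)).comp
      (measurable_forwardRecurrenceTime hpos hfuture j)
  rw [lintegral_mul_eq_lintegral_mul_lintegral_of_independent_measurableSpace (hmeas t).comap_le
    (iSup₂_le fun i _ => (hmeas i).comap_le) (hindep.indep_comap_iSup_comap_Ioi hmeas t)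
    hfirst hrest,
    lintegral_indicator_one (hmeas t (measurableSet_singleton c))]

lemma lintegral_forwardRecurrenceTime_pow_eq (hmeas : ∀ i, Measurable (ξ i))
    (hpos : ∀ i ω, 1 ≤ ξ i ω) (hindep : iIndepFun ξ μ) (hident : ∀ i, μ.map (ξ i) = μ.map (ξ 0))
    {p : ℕ} (hp : p ≠ 0) (t : ℕ) {n : ℕ} (hn : n ≠ 0) :
    ∫⁻ ω, (forwardRecurrenceTime ξ t n ω : ℝ≥0∞) ^ p ∂μ =
      ∫⁻ ω, ((ξ 0 ω - n : ℕ) : ℝ≥0∞) ^ p ∂μ + ∑ c ∈ Finset.Ico 1 n,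
        μ (ξ t ⁻¹' {c}) * ∫⁻ ω, (forwardRecurrenceTime ξ (t + 1) (n - c) ω : ℝ≥0∞) ^ p ∂μ := by
  have hrest : ∀ j, Measurable fun ω => (forwardRecurrenceTime ξ (t + 1) j ω : ℝ≥0∞) ^ p :=
    fun j => by
      have := measurable_forwardRecurrenceTime hpos (t := t + 1) (fun i => hmeas _) j
      fun_prop
  have hfirst : ∫⁻ ω, ((ξ t ω - n : ℕ) : ℝ≥0∞) ^ p ∂μ = ∫⁻ ω, ((ξ 0 ω - n : ℕ) : ℝ≥0∞) ^ p ∂μ :=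
    ((IdentDistrib.mk (hmeas t).aemeasurable (hmeas 0).aemeasurable (hident t)).comp
      (measurable_from_nat (f := fun k : ℕ => ((k - n : ℕ) : ℝ≥0∞) ^ p))).lintegral_eq
  simp_rw [forwardRecurrenceTime_pow_eq_renewal hpos hp t hn]
  rw [lintegral_add_left (by fun_prop), hfirst, lintegral_finsetSum _ fun c _ =>
    (measurable_one.indicator (hmeas t (measurableSet_singleton c))).fun_mul (hrest _)]
  simp_rw [lintegral_indicator_mul_forwardRecurrenceTime_pow hmeas hpos hindep]

theorem lintegral_forwardRecurrenceTime_pow_le [IsProbabilityMeasure μ]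
    (hmeas : ∀ i, Measurable (ξ i)) (hpos : ∀ i ω, 1 ≤ ξ i ω) (hindep : iIndepFun ξ μ)
    (hident : ∀ i, μ.map (ξ i) = μ.map (ξ 0)) {p : ℕ} (hp : p ≠ 0) (n t : ℕ) :
    ∫⁻ ω, (forwardRecurrenceTime ξ t n ω : ℝ≥0∞) ^ p ∂μ ≤
      ∑ k ∈ Finset.Icc 1 n, ∫⁻ ω, ((ξ 0 ω - k : ℕ) : ℝ≥0∞) ^ p ∂μ := by
  induction n using Nat.strong_induction_on generalizing t with
  | _ n ih =>
  rcases n with _ | n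
  · simp [forwardRecurrenceTime_zero, zero_pow hp]
  set S := ∑ k ∈ Finset.Icc 1 n, ∫⁻ ω, ((ξ 0 ω - k : ℕ) : ℝ≥0∞) ^ p ∂μ
  have hmass : ∑ c ∈ Finset.Ico 1 (n + 1), μ (ξ t ⁻¹' {c}) ≤ 1 :=
    (sum_measure_preimage_singleton _ fun c _ => hmeas t (measurableSet_singleton c)).trans_le
      prob_le_one
  rw [lintegral_forwardRecurrenceTime_pow_eq hmeas hpos hindep hident hp t n.add_one_ne_zero,
    Finset.sum_Icc_succ_top (by omega), add_comm S]
  gcongr _ + ?_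
  calc ∑ c ∈ Finset.Ico 1 (n + 1), μ (ξ t ⁻¹' {c}) *
        ∫⁻ ω, (forwardRecurrenceTime ξ (t + 1) (n + 1 - c) ω : ℝ≥0∞) ^ p ∂μ
      ≤ ∑ c ∈ Finset.Ico 1 (n + 1), μ (ξ t ⁻¹' {c}) * S := by
        gcongr with c hc
        have hc := Finset.mem_Ico.1 hc
        exact (ih _ (by omega) _).trans
          (Finset.sum_le_sum_of_subset (Finset.Icc_subset_Icc_right (by omega)))
    _ = (∑ c ∈ Finset.Ico 1 (n + 1), μ (ξ t ⁻¹' {c})) * S := (Finset.sum_mul ..).symm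
    _ ≤ S := mul_le_of_le_one_left' hmass

end Renewal

open Renewal in
/-- For i.i.d. positive-integer random variables with finite `(p+1)`-st moment,
the forward recurrence time `B_n` of the associated renewal process has `p`-th moments
bounded uniformly in `n`. -/
theorem forward_recurrence_time_moment_bound
    {Ω : Type*} {m0 : MeasurableSpace Ω} {μ : Measure Ω} [IsProbabilityMeasure μ]
    (ξ : ℕ → Ω → ℕ) (hmeas : ∀ i, Measurable (ξ i))
    (hpos : ∀ i ω, 1 ≤ ξ i ω)
    (hindep : iIndepFun ξ μ)
    (hident : ∀ i, μ.map (ξ i) = μ.map (ξ 0))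
    (p : ℕ) (hp : 1 ≤ p)
    (hmom : Integrable (fun ω => ((ξ 0 ω : ℝ)) ^ (p + 1)) μ) :
    ∃ K : ℝ, ∀ n : ℕ,
      ∫ ω, ((sInf {k : ℕ | ∃ m : ℕ, (∑ i ∈ Finset.range m, ξ i ω) = n + k} : ℕ) : ℝ) ^ p ∂μ
        ≤ K := by
  have hp0 : p ≠ 0 := by omega
  have hmoment : ∫⁻ ω, (ξ 0 ω : ℝ≥0∞) ^ (p + 1) ∂μ ≠ ⊤ := by
    simpa [ENNReal.ofReal_pow] using hmom.lintegral_lt_top.ne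
  refine ⟨(∫⁻ ω, (ξ 0 ω : ℝ≥0∞) ^ (p + 1) ∂μ).toReal, fun n => ?_⟩
  have hB := measurable_forwardRecurrenceTime hpos (t := 0) (fun i => hmeas _) n
  calc ∫ ω, ((sInf {k : ℕ | ∃ m : ℕ, (∑ i ∈ Finset.range m, ξ i ω) = n + k} : ℕ) : ℝ) ^ p ∂μ
      = (∫⁻ ω, (forwardRecurrenceTime ξ 0 n ω : ℝ≥0∞) ^ p ∂μ).toReal := by
        have hBp : Measurable fun ω => (forwardRecurrenceTime ξ 0 n ω : ℝ≥0∞) ^ p := by fun_prop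
        rw [← integral_toReal hBp.aemeasurable (ae_of_all _ fun ω => by finiteness)]
        simp [forwardRecurrenceTime, partialSum]
    _ ≤ _ := ENNReal.toReal_mono hmoment <|
        (lintegral_forwardRecurrenceTime_pow_le hmeas hpos hindep hident hp0 n 0).trans <|
          (ENNReal.sum_le_tsum _).trans (tsum_lintegral_tsub_pow_le (hmeas 0) hp0)
end

section
/- Let (η_j)_{j≥1} be i.i.d. random variables with 1 ≤ η_j ≤ c_2 n^γ almost surely, for constants c_2 ≤ 1, γ ∈ (0,1], and suppose P(η_1 ≥ a) ≥ c_1 a^{-1/2} for all 1 ≤ a ≤ c_2 n^γ. Let S_k = η_1 + ... + η_k and K(n) = inf{k : S_k > n}. Then E[K(n)] ≤ C n^{1-γ/2} for a constant C depending only on c_1, c_2, γ. -/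
/-!
With `M = c₂ n^γ ≤ n`, every increment lies in `[1, M]`, so the first passage time `K` above `n`
is at most `n + 1`, and `{S_i ≤ n} = {i < K}` depends only on `η_0, …, η_{i-1}`, hence is
independent of `η_i`. Summing `E[1{S_i ≤ n} η_i] = P(S_i ≤ n) E[η]` over `i ≤ n` gives Wald's
identity `E[S_K] = E[K] E[η]`. Overshoot is at most one increment, so `E[S_K] ≤ n + M ≤ 2n`,
while Markov's inequality at the top of the range gives
`E[η] ≥ M P(η ≥ M) ≥ c₁ M^{1/2} = c₁ c₂^{1/2} n^{γ/2}`.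
Dividing, `E[K] ≤ 2 n^{1-γ/2} / (c₁ c₂^{1/2})`.
-/

open MeasureTheory ProbabilityTheory Finset

noncomputable def firstPassage (x : ℕ → ℝ) (t : ℝ) : ℕ :=
  sInf {k : ℕ | t < ∑ i ∈ range k, x i}

section FirstPassage

variable {x : ℕ → ℝ} {t : ℝ} {N : ℕ}

lemma partialSum_le_of_lt_firstPassage {i : ℕ} (hi : i < firstPassage x t) :
    ∑ j ∈ range i, x j ≤ t :=
  not_lt.mp (Nat.notMem_of_lt_sInf hi)

lemma lt_partialSum_firstPassage (hN : t < ∑ i ∈ range N, x i) :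
    t < ∑ i ∈ range (firstPassage x t), x i :=
  Nat.sInf_mem (s := {k : ℕ | t < ∑ i ∈ range k, x i}) ⟨N, hN⟩

lemma filter_partialSum_le_eq_range_firstPassage (hx : ∀ i, 0 ≤ x i)
    (hN : t < ∑ i ∈ range N, x i) :
    (range N).filter (fun i => ∑ j ∈ range i, x j ≤ t) = range (firstPassage x t) := by
  have hK : firstPassage x t ≤ N := Nat.sInf_le hN
  ext i
  simp only [mem_filter, mem_range]
  constructor
  · rintro ⟨-, hi⟩
    by_contra! hKi
    have hmono : ∑ j ∈ range (firstPassage x t), x j ≤ ∑ j ∈ range i, x j :=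
      sum_le_sum_of_subset_of_nonneg (range_subset_range.mpr hKi) fun j _ _ => hx j
    linarith [lt_partialSum_firstPassage hN]
  · intro hi
    exact ⟨hi.trans_le hK, partialSum_le_of_lt_firstPassage hi⟩

lemma partialSum_firstPassage_le {M : ℝ} (hx : ∀ i, x i ≤ M) (ht : 0 ≤ t)
    (hN : t < ∑ i ∈ range N, x i) : ∑ i ∈ range (firstPassage x t), x i ≤ t + M := by
  obtain ⟨m, hm⟩ : ∃ m, firstPassage x t = m + 1 := by
    refine Nat.exists_eq_add_one.mpr (Nat.pos_of_ne_zero fun h0 => ?_)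
    have := lt_partialSum_firstPassage hN
    simp [h0] at this
    linarith
  rw [hm, sum_range_succ]
  have hm_lt : m < firstPassage x t := hm ▸ Nat.lt_succ_self m
  linarith [hx m, partialSum_le_of_lt_firstPassage hm_lt]

lemma sum_range_firstPassage_eq_sum_ite (hx : ∀ i, 0 ≤ x i) (hN : t < ∑ i ∈ range N, x i)
    (y : ℕ → ℝ) :
    ∑ i ∈ range (firstPassage x t), y i =
      ∑ i ∈ range N, if ∑ j ∈ range i, x j ≤ t then y i else 0 := by
  rw [← sum_filter, filter_partialSum_le_eq_range_firstPassage hx hN]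

lemma natCast_lt_sum_range_succ_of_one_le (hx : ∀ i, 1 ≤ x i) (n : ℕ) :
    (n : ℝ) < ∑ i ∈ range (n + 1), x i := by
  have := card_nsmul_le_sum (range (n + 1)) x 1 fun i _ => hx i
  simp only [card_range, nsmul_eq_mul, mul_one, Nat.cast_add, Nat.cast_one] at this
  linarith

end FirstPassage

section Wald

variable {Ω : Type*} [MeasurableSpace Ω] {μ : Measure Ω} {η : ℕ → Ω → ℝ}

lemma integral_indicator_partialSum_le [IsProbabilityMeasure μ] (hmeas : ∀ i, Measurable (η i))
    (hindep : iIndepFun η μ) (t : ℝ) (i : ℕ) :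
    ∫ ω, {ω | ∑ j ∈ range i, η j ω ≤ t}.indicator (η i) ω ∂μ =
      μ.real {ω | ∑ j ∈ range i, η j ω ≤ t} * ∫ ω, η i ω ∂μ := by
  set B := {ω | ∑ j ∈ range i, η j ω ≤ t}
  have hB : MeasurableSet B := measurableSet_le (by fun_prop) measurable_const
  have hindicator : (Set.Iic t).indicator 1 ∘ ∑ j ∈ range i, η j = B.indicator (1 : Ω → ℝ) := by
    ext ω
    simp [B, Set.indicator_apply]
  have hindep_i : IndepFun (B.indicator (1 : Ω → ℝ)) (η i) μ :=
    hindicator ▸ (hindep.indepFun_sum_range_succ hmeas i).comp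
      (measurable_const.indicator measurableSet_Iic) measurable_id
  have hsplit : B.indicator (η i) = B.indicator 1 * η i := by
    ext ω
    by_cases h : ω ∈ B <;> simp [h]
  rw [hsplit, hindep_i.integral_mul_eq_mul_integral
    (measurable_const.indicator hB).aestronglyMeasurable (hmeas i).aestronglyMeasurable,
    integral_indicator_one hB]

theorem integral_sum_range_firstPassage_eq_mul [IsProbabilityMeasure μ]
    (hmeas : ∀ i, Measurable (η i))
    (hindep : iIndepFun η μ) (hident : ∀ i, IdentDistrib (η i) (η 0) μ μ)
    (hint : Integrable (η 0) μ) (hpos : ∀ᵐ ω ∂μ, ∀ i, 0 ≤ η i ω) {t : ℝ} {N : ℕ}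
    (hN : ∀ᵐ ω ∂μ, t < ∑ i ∈ range N, η i ω) :
    ∫ ω, ∑ i ∈ range (firstPassage (η · ω) t), η i ω ∂μ =
      (∫ ω, (firstPassage (η · ω) t : ℝ) ∂μ) * ∫ ω, η 0 ω ∂μ := by
  set B : ℕ → Set Ω := fun i => {ω | ∑ j ∈ range i, η j ω ≤ t}
  have hB : ∀ i, MeasurableSet (B i) := fun i =>
    measurableSet_le (Finset.measurable_sum _ fun j _ => hmeas j) measurable_const
  have hsum : ∀ y : ℕ → Ω → ℝ, (fun ω => ∑ i ∈ range (firstPassage (η · ω) t), y i ω)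
      =ᵐ[μ] fun ω => ∑ i ∈ range N, (B i).indicator (y i) ω := by
    intro y
    filter_upwards [hpos, hN] with ω hω hNω
    simp only [sum_range_firstPassage_eq_sum_ite hω hNω, Set.indicator_apply, B,
      Set.mem_ofPred_eq]
  have hK := hsum fun _ _ => 1
  simp only [sum_const, card_range, nsmul_eq_mul, mul_one] at hK
  rw [integral_congr_ae (hsum η), integral_congr_ae hK,
    integral_finsetSum _ fun i _ => ((hident i).integrable_iff.mpr hint).indicator (hB i),
    integral_finsetSum _ fun i _ => (integrable_const 1).indicator (hB i), sum_mul]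
  refine sum_congr rfl fun i _ => ?_
  rw [integral_indicator_partialSum_le hmeas hindep, (hident i).integral_eq,
    integral_indicator_const (1 : ℝ) (hB i), smul_eq_mul, mul_one]

theorem integral_firstPassage_mul_integral_le [IsProbabilityMeasure μ]
    (hmeas : ∀ i, Measurable (η i)) (hindep : iIndepFun η μ)
    (hident : ∀ i, IdentDistrib (η i) (η 0) μ μ) (hint : Integrable (η 0) μ) {M : ℝ}
    (hbdd : ∀ᵐ ω ∂μ, ∀ i, 0 ≤ η i ω ∧ η i ω ≤ M) {t : ℝ} (ht : 0 ≤ t) {N : ℕ}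
    (hN : ∀ᵐ ω ∂μ, t < ∑ i ∈ range N, η i ω) :
    (∫ ω, (firstPassage (η · ω) t : ℝ) ∂μ) * ∫ ω, η 0 ω ∂μ ≤ t + M := by
  rw [← integral_sum_range_firstPassage_eq_mul hmeas hindep hident hint
    (hbdd.mono fun ω hω i => (hω i).1) hN]
  calc _ ≤ ∫ _, t + M ∂μ := by
        refine integral_mono_of_nonneg ?_ (integrable_const _) ?_
        · filter_upwards [hbdd] with ω hω
          exact sum_nonneg fun i _ => (hω i).1
        · filter_upwards [hbdd, hN] with ω hω hNω
          exact partialSum_firstPassage_le (fun i => (hω i).2) ht hNω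
    _ = t + M := by simp

lemma mul_le_integral_of_ofReal_le_measure [IsFiniteMeasure μ] {X : Ω → ℝ} (hX : 0 ≤ᵐ[μ] X)
    (hint : Integrable X μ) {a q : ℝ} (ha : 0 ≤ a)
    (htail : ENNReal.ofReal q ≤ μ {ω | a ≤ X ω}) : a * q ≤ ∫ ω, X ω ∂μ :=
  (mul_le_mul_of_nonneg_left
    ((ENNReal.ofReal_le_iff_le_toReal (measure_ne_top _ _)).mp htail) ha).trans
    (mul_meas_ge_le_integral_of_nonneg hX hint a)

end Wald

theorem renewal_count_bound_general (c₁ c₂ γ : ℝ)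
    (hc₁ : 0 < c₁) (hc₂ : 0 < c₂) (hc₂' : c₂ ≤ 1) (hγ' : γ ≤ 1) :
    ∃ C : ℝ, 0 < C ∧
      ∀ (n : ℕ), 0 < n →
      ∀ (Ω : Type) (m0 : MeasurableSpace Ω) (μ : Measure Ω),
        IsProbabilityMeasure μ →
        ∀ (η : ℕ → Ω → ℝ),
          (∀ i, Measurable (η i)) →
          iIndepFun η μ →
          (∀ i, μ.map (η i) = μ.map (η 0)) →
          (∀ i, ∀ᵐ ω ∂μ, 1 ≤ η i ω ∧ η i ω ≤ c₂ * (n : ℝ) ^ γ) →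
          (∀ a : ℝ, 1 ≤ a → a ≤ c₂ * (n : ℝ) ^ γ →
            ENNReal.ofReal (c₁ * a ^ (-(1:ℝ)/2)) ≤ μ {ω | a ≤ η 0 ω}) →
          ∫ ω, ((sInf {k : ℕ | (n : ℝ) < ∑ i ∈ Finset.range k, η i ω} : ℕ) : ℝ) ∂μ
            ≤ C * (n : ℝ) ^ (1 - γ/2) := by
  set d := c₁ * c₂ ^ ((1 : ℝ) / 2)
  refine ⟨2 / d, by positivity, fun n hn Ω _ μ _ η hmeas hindep hident hbdd htail => ?_⟩
  set M := c₂ * (n : ℝ) ^ γ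
  have hMn : M ≤ n := (mul_le_of_le_one_left (by positivity) hc₂').trans
    (Real.rpow_le_self_of_one_le (by exact_mod_cast hn) hγ')
  have hgood : ∀ᵐ ω ∂μ, ∀ i, 1 ≤ η i ω ∧ η i ω ≤ M := ae_all_iff.mpr hbdd
  have hM1 : 1 ≤ M := by
    obtain ⟨ω, hω⟩ := hgood.exists
    exact (hω 0).1.trans (hω 0).2
  have hint : Integrable (η 0) μ := .of_bound (hmeas 0).aestronglyMeasurable M <| by
    filter_upwards [hbdd 0] with ω hω
    rw [Real.norm_eq_abs, abs_le]
    constructor <;> linarith [hω.1, hω.2]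
  have hwald := integral_firstPassage_mul_integral_le hmeas hindep
    (fun i => ⟨(hmeas i).aemeasurable, (hmeas 0).aemeasurable, hident i⟩) hint
    (hgood.mono fun ω hω i => ⟨zero_le_one.trans (hω i).1, (hω i).2⟩) (Nat.cast_nonneg n)
    (hgood.mono fun ω hω => natCast_lt_sum_range_succ_of_one_le (fun i => (hω i).1) n)
  have hmean : d * (n : ℝ) ^ (γ / 2) ≤ ∫ ω, η 0 ω ∂μ :=
    calc d * (n : ℝ) ^ (γ / 2) = M * (c₁ * M ^ (-(1 : ℝ) / 2)) := by
          rw [mul_left_comm, ← Real.rpow_one_add' (by positivity) (by norm_num),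
            Real.mul_rpow hc₂.le (by positivity), ← Real.rpow_mul (by positivity)]
          simp only [d]
          ring_nf
      _ ≤ ∫ ω, η 0 ω ∂μ :=
          mul_le_integral_of_ofReal_le_measure (hgood.mono fun ω hω => zero_le_one.trans (hω 0).1)
            hint (by positivity) (htail M hM1 le_rfl)
  change ∫ ω, (firstPassage (η · ω) n : ℝ) ∂μ ≤ _
  rw [Real.rpow_sub (by positivity), Real.rpow_one, ← mul_div_assoc, div_mul_eq_mul_div,
    div_div, le_div_iff₀ (by positivity)]
  calc _ ≤ (∫ ω, (firstPassage (η · ω) n : ℝ) ∂μ) * ∫ ω, η 0 ω ∂μ :=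
        mul_le_mul_of_nonneg_left hmean (integral_nonneg fun _ => Nat.cast_nonneg _)
    _ ≤ n + M := hwald
    _ ≤ 2 * n := by linarith

/-- For i.i.d. increments `η_j` with `1 ≤ η_j ≤ c₂ n^γ` and tail
`P(η ≥ a) ≥ c₁ a^{-1/2}` on `[1, c₂ n^γ]`, the renewal count
`K(n) = inf{k : S_k > n}` satisfies `E[K(n)] ≤ C n^{1-γ/2}` with `C = C(c₁,c₂,γ)`. -/
theorem renewal_count_bound (c₁ c₂ γ : ℝ)
    (hc₁ : 0 < c₁) (hc₂ : 0 < c₂) (hc₂' : c₂ ≤ 1) (hγ : 0 < γ) (hγ' : γ ≤ 1) :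
    ∃ C : ℝ, 0 < C ∧
      ∀ (n : ℕ), 0 < n →
      ∀ (Ω : Type) (m0 : MeasurableSpace Ω) (μ : Measure Ω),
        IsProbabilityMeasure μ →
        ∀ (η : ℕ → Ω → ℝ),
          (∀ i, Measurable (η i)) →
          iIndepFun η μ →
          (∀ i, μ.map (η i) = μ.map (η 0)) →
          (∀ i, ∀ᵐ ω ∂μ, 1 ≤ η i ω ∧ η i ω ≤ c₂ * (n : ℝ) ^ γ) →
          (∀ a : ℝ, 1 ≤ a → a ≤ c₂ * (n : ℝ) ^ γ →
            ENNReal.ofReal (c₁ * a ^ (-(1:ℝ)/2)) ≤ μ {ω | a ≤ η 0 ω}) →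
          ∫ ω, ((sInf {k : ℕ | (n : ℝ) < ∑ i ∈ Finset.range k, η i ω} : ℕ) : ℝ) ∂μ
            ≤ C * (n : ℝ) ^ (1 - γ/2) :=
  renewal_count_bound_general c₁ c₂ γ hc₁ hc₂ hc₂' hγ'
end

section
/- Let T̄ = inf{n ≥ 1 : S_n < 0} be the first entrance time into the negative half-line for a one-dimensional symmetric, nondegenerate random walk (S_n) started at 0 with integer steps and finite variance. Then there is a constant c > 0 such that P(T̄ ≥ a) ≥ c/√a for all a ≥ 1. -/
/-!
Write `S_n` for the walk, `q_m = P(S_1, …, S_m ≥ 0) = P(T̄ > m)` and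
`u_k = P(S_j < S_k for all j < k)`. Splitting a path of length `n` at the first time its
maximum is attained gives, by independence of the two pieces, time reversal of the first
piece and the symmetry of the steps, the identity `∑_{k ≤ n} u_k q_{n-k} = 1`. Since
`ρ q_k ≤ u_k ≤ q_k` with `ρ = P(ξ ≥ 1) > 0`, the convolution square of the decreasing
sequence `q` lies between `1` and `1/ρ`, and this forces `q_h ≥ √(ρ / (32 (h + 1)))`.
-/

open MeasureTheory ProbabilityTheory Finset

theorem sq_sum_range_le_sum_sum_mul_sub {q : ℕ → ℝ} (hq0 : ∀ n, 0 ≤ q n) (h : ℕ) :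
    (∑ k ∈ range (h + 1), q k) ^ 2 ≤
      ∑ n ∈ range (2 * h + 1), ∑ k ∈ range (n + 1), q k * q (n - k) := by
  have hprod (i j : ℕ) : 0 ≤ q i * q j := mul_nonneg (hq0 i) (hq0 j)
  calc (∑ k ∈ range (h + 1), q k) ^ 2
        = ∑ i ∈ range (h + 1), ∑ j ∈ range (h + 1), q i * q j := by rw [sq, sum_mul_sum]
    _ ≤ ∑ i ∈ range (h + 1), ∑ j ∈ range (2 * h + 1 - i), q i * q j :=
        sum_le_sum fun i hi ↦ sum_le_sum_of_subset_of_nonneg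
          (range_subset_range.2 (by rw [mem_range] at hi; omega)) fun j _ _ ↦ hprod i j
    _ ≤ ∑ i ∈ range (2 * h + 1), ∑ j ∈ range (2 * h + 1 - i), q i * q j :=
        sum_le_sum_of_subset_of_nonneg (range_subset_range.2 (by omega))
          fun i _ _ ↦ sum_nonneg fun j _ ↦ hprod i j
    _ = ∑ n ∈ range (2 * h + 1), ∑ k ∈ range (n + 1), q k * q (n - k) :=
        (sum_range_diag_flip _ fun k l ↦ q k * q l).symm

theorem sum_range_two_mul_add_one_le {q : ℕ → ℝ} (hq0 : ∀ n, 0 ≤ q n) (hq : Antitone q) (h : ℕ) :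
    ∑ k ∈ range (2 * h + 1), q k ≤ 2 * ∑ k ∈ range (h + 1), q k := by
  have htail : ∑ k ∈ range h, q (h + 1 + k) ≤ ∑ k ∈ range (h + 1), q k :=
    (sum_le_sum fun k _ ↦ hq (by omega)).trans <|
      sum_le_sum_of_subset_of_nonneg (range_subset_range.2 (by omega)) fun k _ _ ↦ hq0 k
  rw [show 2 * h + 1 = (h + 1) + h by ring, sum_range_add]
  linarith

theorem one_le_four_mul_mul_sum_range {q : ℕ → ℝ} (hq0 : ∀ n, 0 ≤ q n) (hq : Antitone q) (h : ℕ)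
    (hconv : 1 ≤ ∑ k ∈ range (2 * h + 1), q k * q (2 * h - k)) :
    1 ≤ 4 * q h * ∑ k ∈ range (h + 1), q k := by
  -- one of `k` and `2h - k` is at least `h`
  have hterm : ∀ k ∈ range (2 * h + 1), q k * q (2 * h - k) ≤ q h * (q k + q (2 * h - k)) := by
    intro k _
    rcases le_total k h with hk | hk
    · nlinarith [hq (show h ≤ 2 * h - k by omega), hq0 k, hq0 (2 * h - k)]
    · nlinarith [hq hk, hq0 k, hq0 (2 * h - k)]
  have hrefl : ∑ k ∈ range (2 * h + 1), q (2 * h - k) = ∑ k ∈ range (2 * h + 1), q k := by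
    simpa using sum_range_reflect q (2 * h + 1)
  calc 1 ≤ ∑ k ∈ range (2 * h + 1), q h * (q k + q (2 * h - k)) := hconv.trans (sum_le_sum hterm)
    _ = 2 * q h * ∑ k ∈ range (2 * h + 1), q k := by
      rw [← mul_sum, sum_add_distrib, hrefl]; ring
    _ ≤ 2 * q h * (2 * ∑ k ∈ range (h + 1), q k) :=
      mul_le_mul_of_nonneg_left (sum_range_two_mul_add_one_le hq0 hq h) (by linarith [hq0 h])
    _ = 4 * q h * ∑ k ∈ range (h + 1), q k := by ring

theorem le_mul_sq_of_sum_mul_sub_bounds {q : ℕ → ℝ} {ρ : ℝ} (hρ : 0 ≤ ρ) (hq0 : ∀ n, 0 ≤ q n)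
    (hq : Antitone q)
    (hlow : ∀ n, 1 ≤ ∑ k ∈ range (n + 1), q k * q (n - k))
    (hup : ∀ n, ρ * ∑ k ∈ range (n + 1), q k * q (n - k) ≤ 1) (h : ℕ) :
    ρ ≤ 32 * (h + 1) * q h ^ 2 := by
  set Q := ∑ k ∈ range (h + 1), q k
  have hQ : ρ * Q ^ 2 ≤ 2 * h + 1 := by
    calc ρ * Q ^ 2 ≤ ρ * ∑ n ∈ range (2 * h + 1), ∑ k ∈ range (n + 1), q k * q (n - k) := by
          gcongr; exact sq_sum_range_le_sum_sum_mul_sub hq0 h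
      _ ≤ ∑ n ∈ range (2 * h + 1), (1 : ℝ) := by rw [mul_sum]; exact sum_le_sum fun n _ ↦ hup n
      _ = 2 * h + 1 := by simp
  have hqQ := one_le_four_mul_mul_sum_range hq0 hq h (hlow (2 * h))
  calc ρ ≤ ρ * (4 * q h * Q) ^ 2 := le_mul_of_one_le_right hρ (by nlinarith)
    _ = 16 * q h ^ 2 * (ρ * Q ^ 2) := by ring
    _ ≤ 16 * q h ^ 2 * (2 * h + 1) := by gcongr
    _ ≤ 32 * (h + 1) * q h ^ 2 := by nlinarith [sq_nonneg (q h)]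

section iid

variable {Ω ι β : Type*} {m0 : MeasurableSpace Ω} {μ : Measure Ω} [MeasurableSpace β]
  {ξ : ι → Ω → β}

theorem ProbabilityTheory.iIndepFun.map_comp_eq_infinitePi {ν : Measure β} [IsProbabilityMeasure ν]
    (hmeas : ∀ i, Measurable (ξ i)) (hindep : iIndepFun ξ μ) (hlaw : ∀ i, μ.map (ξ i) = ν)
    {κ : Type*} {g : κ → ι} (hg : g.Injective) :
    μ.map (fun ω j ↦ ξ (g j) ω) = Measure.infinitePi fun _ ↦ ν := by
  rw [(hindep.precomp hg).map_fun_eq_infinitePi_map fun j ↦ hmeas (g j)]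
  simp only [hlaw]

theorem ProbabilityTheory.iIndepFun.measure_comp_preimage {ν : Measure β} [IsProbabilityMeasure ν]
    (hmeas : ∀ i, Measurable (ξ i)) (hindep : iIndepFun ξ μ) (hlaw : ∀ i, μ.map (ξ i) = ν)
    {κ : Type*} {g : κ → ι} (hg : g.Injective) {C : Set (κ → β)} (hC : MeasurableSet C) :
    μ {ω | (fun j ↦ ξ (g j) ω) ∈ C} = Measure.infinitePi (fun _ ↦ ν) C := by
  rw [← hindep.map_comp_eq_infinitePi hmeas hlaw hg, Measure.map_apply (by fun_prop) hC]
  rfl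

theorem ProbabilityTheory.iIndepFun.measure_inter_eq_mul_of_disjoint (hmeas : ∀ i, Measurable (ξ i))
    (hindep : iIndepFun ξ μ) {S T : Set ι} (hST : Disjoint S T) {A B : Set Ω}
    (hA : MeasurableSet[⨆ i ∈ S, MeasurableSpace.comap (ξ i) ‹_›] A)
    (hB : MeasurableSet[⨆ i ∈ T, MeasurableSpace.comap (ξ i) ‹_›] B) :
    μ (A ∩ B) = μ A * μ B :=
  (Indep_iff _ _ μ).1
    (indep_iSup_of_disjoint (fun i ↦ (hmeas i).comap_le) hindep.iIndep hST) A B hA hB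

theorem measurable_iSup_comap {S : Set ι} {i : ι} (hi : i ∈ S) :
    Measurable[⨆ i ∈ S, MeasurableSpace.comap (ξ i) ‹_›] (ξ i) :=
  (comap_measurable (ξ i)).mono (le_iSup₂_of_le i hi le_rfl) le_rfl

theorem measurable_sum_iSup_comap [AddCommMonoid β] [MeasurableAdd₂ β] {S : Set ι}
    {s : Finset ι} (hs : ↑s ⊆ S) :
    Measurable[⨆ i ∈ S, MeasurableSpace.comap (ξ i) ‹_›] fun ω ↦ ∑ i ∈ s, ξ i ω :=
  Finset.measurable_sum s fun _ hi ↦ measurable_iSup_comap (hs hi)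

end iid

theorem existsUnique_first_argmax {α : Type*} [LinearOrder α] (f : ℕ → α) (n : ℕ) :
    ∃! k, k ≤ n ∧ (∀ j < k, f j < f k) ∧ ∀ j, k < j → j ≤ n → f j ≤ f k := by
  classical
  have hmax : ∃ k, k ≤ n ∧ ∀ j ≤ n, f j ≤ f k := by
    obtain ⟨k, hk, hmax⟩ := (range (n + 1)).exists_max_image f nonempty_range_add_one
    exact ⟨k, by simpa [Nat.lt_succ_iff] using hk, fun j hj ↦ hmax j (by simpa [Nat.lt_succ_iff])⟩
  obtain ⟨k, hkn, hbefore, hafter⟩ :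
      ∃ k, k ≤ n ∧ (∀ j < k, f j < f k) ∧ ∀ j, k < j → j ≤ n → f j ≤ f k := by
    obtain ⟨hkn, hk⟩ := Nat.find_spec hmax
    refine ⟨Nat.find hmax, hkn, fun j hj ↦ ?_, fun j _ hj ↦ hk j hj⟩
    by_contra! hle
    exact Nat.find_min hmax hj ⟨by omega, fun i hi ↦ (hk i hi).trans hle⟩
  refine ⟨k, ⟨hkn, hbefore, hafter⟩, fun l ⟨hln, hbefore', hafter'⟩ ↦ ?_⟩
  rcases lt_trichotomy l k with h | h | h
  · exact absurd (hafter' k h hkn) (hbefore l h).not_ge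
  · exact h
  · exact absurd (hafter l h hln) (hbefore' k h).not_ge

def reflectBelow (k i : ℕ) : ℕ := if i < k then k - 1 - i else i

theorem reflectBelow_involutive (k : ℕ) : Function.Involutive (reflectBelow k) := by
  intro i
  unfold reflectBelow
  split_ifs <;> omega

theorem sum_range_reflectBelow {G : Type*} [AddCommGroup G] (x : ℕ → G) {j k : ℕ} (hj : j ≤ k) :
    ∑ i ∈ range j, x (reflectBelow k i) = ∑ i ∈ range k, x i - ∑ i ∈ range (k - j), x i := by
  induction j with
  | zero => simp
  | succ j ih =>
    obtain ⟨l, rfl⟩ : ∃ l, k = l + (j + 1) := ⟨k - (j + 1), by omega⟩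
    rw [sum_range_succ, ih (by omega), reflectBelow, if_pos (by omega),
      show l + (j + 1) - j = l + 1 by omega, show l + (j + 1) - 1 - j = l by omega, sum_range_succ]
    simp only [add_tsub_cancel_right]
    abel

def nonnegUntil (m : ℕ) : Set (ℕ → ℤ) := {x | ∀ j ≤ m, 0 ≤ ∑ i ∈ range j, x i}

def weakRecordAt (k : ℕ) : Set (ℕ → ℤ) :=
  {x | ∀ j < k, ∑ i ∈ range j, x i ≤ ∑ i ∈ range k, x i}

def strictRecordAt (k : ℕ) : Set (ℕ → ℤ) :=
  {x | ∀ j < k, ∑ i ∈ range j, x i < ∑ i ∈ range k, x i}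

-- Phrased through the increments after time `k`, so that it only depends on the steps from `k` on.
def noRiseAfter (k m : ℕ) : Set (ℕ → ℤ) := {x | ∀ j ≤ m, ∑ i ∈ Ico k (k + j), x i ≤ 0}

theorem comp_reflectBelow_mem_weakRecordAt_iff (x : ℕ → ℤ) (k : ℕ) :
    (fun i ↦ x (reflectBelow k i)) ∈ weakRecordAt k ↔ x ∈ nonnegUntil k := by
  have hk : ∑ i ∈ range k, x (reflectBelow k i) = ∑ i ∈ range k, x i := by
    simp [sum_range_reflectBelow x le_rfl]
  simp only [weakRecordAt, nonnegUntil, Set.mem_ofPred_eq, hk]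
  refine ⟨fun h j hj ↦ ?_, fun h j hj ↦ ?_⟩
  · rcases Nat.eq_zero_or_pos j with rfl | hj0
    · simp
    · have := h (k - j) (by omega)
      rwa [sum_range_reflectBelow x (by omega), Nat.sub_sub_self hj, sub_le_self_iff] at this
  · rw [sum_range_reflectBelow x hj.le, sub_le_self_iff]
    exact h _ (by omega)

theorem neg_shift_mem_nonnegUntil_iff (x : ℕ → ℤ) (k m : ℕ) :
    (fun i ↦ -x (k + i)) ∈ nonnegUntil m ↔ x ∈ noRiseAfter k m := by
  simp [nonnegUntil, noRiseAfter, sum_Ico_eq_sum_range]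

theorem mem_noRiseAfter_iff {x : ℕ → ℤ} {k n : ℕ} :
    x ∈ noRiseAfter k (n - k) ↔ ∀ j, k < j → j ≤ n → ∑ i ∈ range j, x i ≤ ∑ i ∈ range k, x i := by
  simp only [noRiseAfter, Set.mem_ofPred_eq]
  refine ⟨fun h j hkj hjn ↦ ?_, fun h j hj ↦ ?_⟩
  · have := h (j - k) (by omega)
    rw [Nat.add_sub_cancel' hkj.le] at this
    rw [← sum_range_add_sum_Ico _ hkj.le]
    linarith
  · rcases Nat.eq_zero_or_pos j with rfl | hj0
    · simp
    · have := h (k + j) (by omega) (by omega)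
      rw [← sum_range_add_sum_Ico _ (Nat.le_add_right k j)] at this
      linarith

theorem existsUnique_mem_strictRecordAt_inter_noRiseAfter (x : ℕ → ℤ) (n : ℕ) :
    ∃! k, k ≤ n ∧ x ∈ strictRecordAt k ∧ x ∈ noRiseAfter k (n - k) := by
  simpa only [strictRecordAt, Set.mem_ofPred_eq, mem_noRiseAfter_iff]
    using existsUnique_first_argmax (fun j ↦ ∑ i ∈ range j, x i) n

theorem mem_nonnegUntil_iff {x : ℕ → ℤ} {m : ℕ} :
    x ∈ nonnegUntil m ↔ ∀ n, 1 ≤ n → n < m + 1 → 0 ≤ ∑ i ∈ range n, x i := by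
  refine ⟨fun h n _ hn ↦ h n (by omega), fun h n hn ↦ ?_⟩
  rcases Nat.eq_zero_or_pos n with rfl | hn0
  · simp
  · exact h n hn0 (by omega)

theorem measurableSet_nonnegUntil (m : ℕ) : MeasurableSet (nonnegUntil m) := by
  unfold nonnegUntil; measurability

theorem measurableSet_weakRecordAt (m : ℕ) : MeasurableSet (weakRecordAt m) := by
  unfold weakRecordAt; measurability

theorem measurableSet_noRiseAfter (k m : ℕ) : MeasurableSet (noRiseAfter k m) := by
  unfold noRiseAfter; measurability

section walk

variable {Ω : Type*} {m0 : MeasurableSpace Ω} {μ : Measure Ω} {ξ : ℕ → Ω → ℤ}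

theorem measure_weakRecordAt [IsProbabilityMeasure μ] (hmeas : ∀ i, Measurable (ξ i))
    (hindep : iIndepFun ξ μ) (hident : ∀ i, μ.map (ξ i) = μ.map (ξ 0)) (k : ℕ) :
    μ {ω | (fun i ↦ ξ i ω) ∈ weakRecordAt k} = μ {ω | (fun i ↦ ξ i ω) ∈ nonnegUntil k} := by
  have := Measure.isProbabilityMeasure_map (μ := μ) (hmeas 0).aemeasurable
  simp_rw [← comp_reflectBelow_mem_weakRecordAt_iff]
  exact (hindep.measure_comp_preimage hmeas hident Function.injective_id
    (measurableSet_weakRecordAt k)).trans (hindep.measure_comp_preimage hmeas hident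
      (reflectBelow_involutive k).injective (measurableSet_weakRecordAt k)).symm

theorem measure_noRiseAfter [IsProbabilityMeasure μ] (hmeas : ∀ i, Measurable (ξ i))
    (hindep : iIndepFun ξ μ) (hident : ∀ i, μ.map (ξ i) = μ.map (ξ 0))
    (hsym : μ.map (ξ 0) = μ.map (fun ω ↦ -ξ 0 ω)) (k m : ℕ) :
    μ {ω | (fun i ↦ ξ i ω) ∈ noRiseAfter k m} = μ {ω | (fun i ↦ ξ i ω) ∈ nonnegUntil m} := by
  have := Measure.isProbabilityMeasure_map (μ := μ) (hmeas 0).aemeasurable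
  have hneg (i : ℕ) : μ.map (fun ω ↦ -ξ i ω) = μ.map (ξ 0) := by
    calc μ.map (fun ω ↦ -ξ i ω) = (μ.map (ξ i)).map Neg.neg :=
          (Measure.map_map measurable_neg (hmeas i)).symm
      _ = μ.map (ξ 0) := by
          rw [hident i, Measure.map_map measurable_neg (hmeas 0), hsym]; rfl
  simp_rw [← neg_shift_mem_nonnegUntil_iff]
  exact ((hindep.comp (fun _ ↦ Neg.neg) fun _ ↦ measurable_neg).measure_comp_preimage
    (fun i ↦ (hmeas i).neg) hneg (add_right_injective k) (measurableSet_nonnegUntil m)).trans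
    (hindep.measure_comp_preimage hmeas hident Function.injective_id
      (measurableSet_nonnegUntil m)).symm

theorem measurableSet_iSup_comap_strictRecordAt (k : ℕ) :
    MeasurableSet[⨆ i ∈ Set.Iio k, MeasurableSpace.comap (ξ i) inferInstance]
      {ω | (fun i ↦ ξ i ω) ∈ strictRecordAt k} := by
  simp only [strictRecordAt, Set.mem_ofPred_eq]
  simp only [Set.ofPred_forall]
  exact .iInter fun j ↦ .iInter fun hj ↦ measurableSet_lt
    (measurable_sum_iSup_comap (by rw [coe_range]; exact Set.Iio_subset_Iio hj.le))
    (measurable_sum_iSup_comap (by rw [coe_range]))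

theorem measurableSet_iSup_comap_weakRecordAt (k : ℕ) :
    MeasurableSet[⨆ i ∈ Set.Iio k, MeasurableSpace.comap (ξ i) inferInstance]
      {ω | (fun i ↦ ξ i ω) ∈ weakRecordAt k} := by
  simp only [weakRecordAt, Set.mem_ofPred_eq]
  simp only [Set.ofPred_forall]
  exact .iInter fun j ↦ .iInter fun hj ↦ measurableSet_le
    (measurable_sum_iSup_comap (by rw [coe_range]; exact Set.Iio_subset_Iio hj.le))
    (measurable_sum_iSup_comap (by rw [coe_range]))

theorem measurableSet_iSup_comap_noRiseAfter (k m : ℕ) :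
    MeasurableSet[⨆ i ∈ Set.Ici k, MeasurableSpace.comap (ξ i) inferInstance]
      {ω | (fun i ↦ ξ i ω) ∈ noRiseAfter k m} := by
  simp only [noRiseAfter, Set.mem_ofPred_eq]
  simp only [Set.ofPred_forall]
  exact .iInter fun j ↦ .iInter fun _ ↦ measurableSet_le
    (measurable_sum_iSup_comap (by rw [coe_Ico]; exact Set.Ico_subset_Ici_self)) measurable_const

theorem sum_measure_strictRecordAt_mul_noRiseAfter [IsProbabilityMeasure μ]
    (hmeas : ∀ i, Measurable (ξ i)) (hindep : iIndepFun ξ μ) (n : ℕ) :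
    ∑ k ∈ range (n + 1), μ {ω | (fun i ↦ ξ i ω) ∈ strictRecordAt k} *
      μ {ω | (fun i ↦ ξ i ω) ∈ noRiseAfter k (n - k)} = 1 := by
  set A := fun k ↦ {ω | (fun i ↦ ξ i ω) ∈ strictRecordAt k}
  set B := fun k ↦ {ω | (fun i ↦ ξ i ω) ∈ noRiseAfter k (n - k)}
  have hA := measurableSet_iSup_comap_strictRecordAt (ξ := ξ)
  have hB (k : ℕ) := measurableSet_iSup_comap_noRiseAfter (ξ := ξ) k (n - k)
  have hle (S : Set ℕ) : ⨆ i ∈ S, MeasurableSpace.comap (ξ i) inferInstance ≤ m0 :=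
    iSup₂_le fun i _ ↦ (hmeas i).comap_le
  have hcover : ⋃ k ∈ range (n + 1), A k ∩ B k = Set.univ := by
    refine Set.eq_univ_of_forall fun ω ↦ Set.mem_iUnion₂.2 ?_
    obtain ⟨k, ⟨hkn, hωA, hωB⟩, -⟩ :=
      existsUnique_mem_strictRecordAt_inter_noRiseAfter (fun i ↦ ξ i ω) n
    exact ⟨k, mem_range.2 (by omega), hωA, hωB⟩
  have hdisj : Set.PairwiseDisjoint ↑(range (n + 1)) fun k ↦ A k ∩ B k := by
    intro k hk l hl hne
    refine Set.disjoint_left.2 fun ω hωk hωl ↦ hne ?_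
    simp only [coe_range, Set.mem_Iio] at hk hl
    exact (existsUnique_mem_strictRecordAt_inter_noRiseAfter (fun i ↦ ξ i ω) n).unique
      ⟨by omega, hωk⟩ ⟨by omega, hωl⟩
  calc ∑ k ∈ range (n + 1), μ (A k) * μ (B k) = ∑ k ∈ range (n + 1), μ (A k ∩ B k) :=
        sum_congr rfl fun k _ ↦ (hindep.measure_inter_eq_mul_of_disjoint hmeas
          (Set.Iio_disjoint_Ici le_rfl) (hA k) (hB k)).symm
    _ = 1 := by
      rw [← measure_biUnion_finset hdisj fun k _ ↦ (hle _ _ (hA k)).inter (hle _ _ (hB k)),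
        hcover, measure_univ]

theorem measure_one_le_mul_weakRecordAt_le (hmeas : ∀ i, Measurable (ξ i))
    (hindep : iIndepFun ξ μ) (hident : ∀ i, μ.map (ξ i) = μ.map (ξ 0)) (k : ℕ) :
    μ {ω | 1 ≤ ξ 0 ω} * μ {ω | (fun i ↦ ξ i ω) ∈ weakRecordAt k} ≤
      μ {ω | (fun i ↦ ξ i ω) ∈ strictRecordAt (k + 1)} := by
  have hstep : μ {ω | 1 ≤ ξ 0 ω} = μ {ω | 1 ≤ ξ k ω} := by
    change μ (ξ 0 ⁻¹' Set.Ici 1) = μ (ξ k ⁻¹' Set.Ici 1)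
    rw [← Measure.map_apply (hmeas 0) measurableSet_Ici, ← hident k,
      Measure.map_apply (hmeas k) measurableSet_Ici]
  have hE : MeasurableSet[⨆ i ∈ ({k} : Set ℕ), MeasurableSpace.comap (ξ i) inferInstance]
      {ω | 1 ≤ ξ k ω} :=
    measurable_iSup_comap (Set.mem_singleton k) measurableSet_Ici
  have hdisj : Disjoint (Set.Iio k) {k} := Set.disjoint_singleton_right.2 (lt_irrefl k)
  rw [hstep, mul_comm, ← hindep.measure_inter_eq_mul_of_disjoint hmeas hdisj
    (measurableSet_iSup_comap_weakRecordAt k) hE]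
  refine measure_mono fun ω ⟨hω, hξ⟩ j hj ↦ ?_
  simp only [weakRecordAt, Set.mem_ofPred_eq] at hω
  simp only [Set.mem_ofPred_eq] at hξ
  rw [sum_range_succ]
  rcases Nat.lt_succ_iff_lt_or_eq.1 hj with hj | rfl
  · linarith [hω j hj]
  · linarith

theorem measure_one_le_pos_of_map_neg_eq {X : Ω → ℤ} (hX : Measurable X)
    (hsym : μ.map X = μ.map (fun ω ↦ -X ω)) (hnondeg : 0 < μ {ω | X ω ≠ 0}) :
    0 < μ {ω | 1 ≤ X ω} := by
  have hflip : μ {ω | X ω ≤ -1} = μ {ω | 1 ≤ X ω} := by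
    change μ (X ⁻¹' Set.Iic (-1)) = _
    rw [← Measure.map_apply hX measurableSet_Iic, hsym,
      Measure.map_apply (f := fun ω ↦ -X ω) hX.neg measurableSet_Iic]
    congr 1
    ext ω
    simp only [Set.mem_preimage, Set.mem_Iic, Set.mem_ofPred_eq]
    omega
  have hcover : {ω | X ω ≠ 0} ⊆ {ω | 1 ≤ X ω} ∪ {ω | X ω ≤ -1} := fun ω hω ↦ by
    simp only [Set.mem_union, Set.mem_ofPred_eq] at hω ⊢
    omega
  refine pos_iff_ne_zero.2 fun h0 ↦ hnondeg.ne' (measure_mono_null hcover ?_)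
  rw [measure_union_null_iff, hflip]
  exact ⟨h0, h0⟩

theorem measureReal_one_le_le_mul_measureReal_nonnegUntil_sq [IsProbabilityMeasure μ]
    (hmeas : ∀ i, Measurable (ξ i)) (hindep : iIndepFun ξ μ)
    (hident : ∀ i, μ.map (ξ i) = μ.map (ξ 0)) (hsym : μ.map (ξ 0) = μ.map (fun ω ↦ -ξ 0 ω))
    (h : ℕ) :
    μ.real {ω | 1 ≤ ξ 0 ω} ≤ 32 * (h + 1) * μ.real {ω | (fun i ↦ ξ i ω) ∈ nonnegUntil h} ^ 2 := by
  set q : ℕ → ℝ := fun m ↦ μ.real {ω | (fun i ↦ ξ i ω) ∈ nonnegUntil m}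
  set u : ℕ → ℝ := fun k ↦ μ.real {ω | (fun i ↦ ξ i ω) ∈ strictRecordAt k}
  set ρ := μ.real {ω | 1 ≤ ξ 0 ω}
  have hq : Antitone q := fun m n hmn ↦ measureReal_mono fun ω hω j hj ↦ hω j (hj.trans hmn)
  have hweak (k : ℕ) : μ.real {ω | (fun i ↦ ξ i ω) ∈ weakRecordAt k} = q k := by
    simp only [q, measureReal_def, measure_weakRecordAt hmeas hindep hident k]
  have hconv (n : ℕ) : ∑ k ∈ range (n + 1), u k * q (n - k) = 1 := by
    have := congrArg ENNReal.toReal (sum_measure_strictRecordAt_mul_noRiseAfter hmeas hindep n)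
    rw [ENNReal.toReal_sum fun _ _ ↦ by finiteness] at this
    simp only [ENNReal.toReal_mul, ENNReal.toReal_one,
      measure_noRiseAfter hmeas hindep hident hsym] at this
    exact this
  have huq (k : ℕ) : u k ≤ q k :=
    (measureReal_mono fun ω hω j hj ↦ (hω j hj).le).trans (hweak k).le
  have hρu (k : ℕ) : ρ * q k ≤ u k := by
    rcases k with _ | k
    · calc ρ * q 0 ≤ 1 * 1 :=
            mul_le_mul measureReal_le_one measureReal_le_one measureReal_nonneg zero_le_one
        _ = u 0 := by simp [u, strictRecordAt]
    · calc ρ * q (k + 1) ≤ ρ * q k := mul_le_mul_of_nonneg_left (hq k.le_succ) measureReal_nonneg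
        _ ≤ u (k + 1) := by
          have := ENNReal.toReal_mono (by finiteness)
            (measure_one_le_mul_weakRecordAt_le hmeas hindep hident k)
          rw [ENNReal.toReal_mul] at this
          rw [← hweak]
          exact this
  refine le_mul_sq_of_sum_mul_sub_bounds measureReal_nonneg (fun _ ↦ measureReal_nonneg) hq
    (fun n ↦ ?_) (fun n ↦ ?_) h
  · rw [← hconv n]
    exact sum_le_sum fun k _ ↦ mul_le_mul_of_nonneg_right (huq k) measureReal_nonneg
  · rw [mul_sum, ← hconv n]
    exact sum_le_sum fun k _ ↦ by
      rw [← mul_assoc]; exact mul_le_mul_of_nonneg_right (hρu k) measureReal_nonneg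

end walk

theorem first_descent_time_lower_bound_general
    {Ω : Type*} {m0 : MeasurableSpace Ω} {μ : Measure Ω} [IsProbabilityMeasure μ]
    (ξ : ℕ → Ω → ℤ) (hmeas : ∀ i, Measurable (ξ i))
    (hindep : iIndepFun ξ μ)
    (hident : ∀ i, μ.map (ξ i) = μ.map (ξ 0))
    (hsym : μ.map (ξ 0) = μ.map (fun ω => -ξ 0 ω))
    (hnondeg : 0 < μ {ω | ξ 0 ω ≠ 0}) :
    ∃ c : ℝ, 0 < c ∧ ∀ a : ℕ, 1 ≤ a →
      ENNReal.ofReal (c / Real.sqrt a) ≤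
        μ {ω | ∀ n : ℕ, 1 ≤ n → n < a → 0 ≤ ∑ i ∈ Finset.range n, ξ i ω} := by
  set ρ := μ.real {ω | 1 ≤ ξ 0 ω}
  have hρ : 0 < ρ := ENNReal.toReal_pos
    (measure_one_le_pos_of_map_neg_eq (hmeas 0) hsym hnondeg).ne' (by finiteness)
  refine ⟨Real.sqrt (ρ / 32), by positivity, fun a ha ↦ ?_⟩
  obtain ⟨m, rfl⟩ : ∃ m, a = m + 1 := ⟨a - 1, by omega⟩
  have hbound := measureReal_one_le_le_mul_measureReal_nonnegUntil_sq hmeas hindep hident hsym m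
  simp_rw [← mem_nonnegUntil_iff]
  refine ENNReal.ofReal_le_of_le_toReal ?_
  rw [← measureReal_def, div_le_iff₀ (by positivity), ← Real.sqrt_sq measureReal_nonneg,
    ← Real.sqrt_mul (sq_nonneg _)]
  exact Real.sqrt_le_sqrt (by push_cast; linarith)

/-- For a symmetric, nondegenerate, finite-variance integer random walk
started at 0, the first entrance time `T̄` into the negative half-line satisfies
`P(T̄ ≥ a) ≥ c/√a` for some constant `c > 0` and all `a ≥ 1`. -/
theorem first_descent_time_lower_bound
    {Ω : Type*} {m0 : MeasurableSpace Ω} {μ : Measure Ω} [IsProbabilityMeasure μ]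
    (ξ : ℕ → Ω → ℤ) (hmeas : ∀ i, Measurable (ξ i))
    (hindep : iIndepFun ξ μ)
    (hident : ∀ i, μ.map (ξ i) = μ.map (ξ 0))
    (hsym : μ.map (ξ 0) = μ.map (fun ω => -ξ 0 ω))
    (hnondeg : 0 < μ {ω | ξ 0 ω ≠ 0})
    (hvar : Integrable (fun ω => ((ξ 0 ω : ℝ)) ^ 2) μ) :
    ∃ c : ℝ, 0 < c ∧ ∀ a : ℕ, 1 ≤ a →
      ENNReal.ofReal (c / Real.sqrt a) ≤
        μ {ω | ∀ n : ℕ, 1 ≤ n → n < a → 0 ≤ ∑ i ∈ Finset.range n, ξ i ω} :=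
  first_descent_time_lower_bound_general (m0 := m0) ξ hmeas hindep hident hsym hnondeg
end
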